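/- Any Poincaré invariant linear partial differential operator of the second order on space-time ℝ×ℝⁿ (with continuous coefficients and not all second-order coefficients vanishing) is of the form L = α□ + β for some α ∈ ℂ\{0} and β ∈ ℂ. -/

import Mathlib

/-!
Plane waves `x ↦ exp ⟨w, x⟩` are joint eigenfunctions of all `∂ᵢ`, so `L` acts on them by
multiplication with its symbol `∑_β a_β(x) w^β`, and a polynomial identity in `w` determines the
coefficients. Translation invariance makes the symbol independent of `x`, and invariance under `Λ`
becomes `P(w Λ) = P(w)`. Reflections of single coordinates lie in `O(1,n)` and kill every
coefficient with an odd exponent, leaving `P(w) = A₀ + ∑ᵢ Aᵢ wᵢ²`; the boost in the `(t, xₖ)`-plane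
with `cosh = 5/4`, `sinh = 3/4` then forces `Aₖ = -A_t`, and `A_t ≠ 0` because some second-order
coefficient is nonzero.
-/

open scoped BigOperators

noncomputable section

/-- Partial derivative in the `i`-th coordinate direction. -/
def pd {d : ℕ} (i : Fin d) (u : (Fin d → ℝ) → ℂ) : (Fin d → ℝ) → ℂ :=
  fun x => fderiv ℝ u x (Pi.single i 1)

/-- Iterated mixed partial derivative `∂^β` for a multi-index `β`. -/
def pdMulti {d : ℕ} (β : Fin d → ℕ) (u : (Fin d → ℝ) → ℂ) : (Fin d → ℝ) → ℂ :=
  (List.finRange d).foldr (fun i v => (pd i)^[β i] v) u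

/-- The finite set of multi-indices (on `d` variables) of total degree at most `m`. -/
def mIdx (d m : ℕ) : Finset (Fin d → ℕ) :=
  (Fintype.piFinset fun _ : Fin d => Finset.range (m + 1)).filter fun β => (∑ i, β i) ≤ m

/-- The linear partial differential operator `L = ∑_{|β| ≤ m} a_β ∂^β`. -/
def opApply {d : ℕ} (m : ℕ) (a : (Fin d → ℕ) → (Fin d → ℝ) → ℂ)
    (u : (Fin d → ℝ) → ℂ) : (Fin d → ℝ) → ℂ :=
  fun x => ∑ β ∈ mIdx d m, a β x * pdMulti β u x

/-- Smooth (`C^∞`) functions. -/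
def SmoothFn {d : ℕ} (u : (Fin d → ℝ) → ℂ) : Prop := ContDiff ℝ (⊤ : ℕ∞) u

/-- The Minkowski metric matrix `g = diag(1, -1, …, -1)` on `ℝ × ℝⁿ`. -/
def minkMatrix (n : ℕ) : Matrix (Fin (n + 1)) (Fin (n + 1)) ℝ :=
  Matrix.diagonal fun i => if i = 0 then 1 else -1

/-- Membership in the Lorentz group `O(1,n)`:  `ᵗΛ g Λ = g`. -/
def IsLorentz {n : ℕ} (Λ : Matrix (Fin (n + 1)) (Fin (n + 1)) ℝ) : Prop :=
  Λ.transpose * minkMatrix n * Λ = minkMatrix n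

/-- The d'Alembertian `□ = ∂_t² - ∂₁² - ⋯ - ∂ₙ²` on space-time `ℝ × ℝⁿ`
(coordinate `0` is time). -/
def dAlem {n : ℕ} (u : (Fin (n + 1) → ℝ) → ℂ) : (Fin (n + 1) → ℝ) → ℂ :=
  fun x => pd 0 (pd 0 u) x - ∑ j : Fin n, pd j.succ (pd j.succ u) x

/-- `L` is translation invariant: `T_y^* L u = L T_y^* u`. -/
def TransInv {n : ℕ} (m : ℕ) (a : (Fin (n + 1) → ℕ) → (Fin (n + 1) → ℝ) → ℂ) : Prop :=
  ∀ y : Fin (n + 1) → ℝ, ∀ u : (Fin (n + 1) → ℝ) → ℂ, SmoothFn u →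
    ∀ x, opApply m a u (x - y) = opApply m a (fun z => u (z - y)) x

/-- `L` is Lorentz invariant: `Λ^* L u = L Λ^* u` for all `Λ ∈ O(1,n)`. -/
def LorentzInv {n : ℕ} (m : ℕ) (a : (Fin (n + 1) → ℕ) → (Fin (n + 1) → ℝ) → ℂ) : Prop :=
  ∀ Λ : Matrix (Fin (n + 1)) (Fin (n + 1)) ℝ, IsLorentz Λ →
    ∀ u : (Fin (n + 1) → ℝ) → ℂ, SmoothFn u →
      ∀ x, opApply m a u (Λ.mulVec x) = opApply m a (fun z => u (Λ.mulVec z)) x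

open Matrix

section MultiIndex

variable {d : ℕ}

lemma zero_mem_mIdx (m : ℕ) : (0 : Fin d → ℕ) ∈ mIdx d m := by
  simp [mIdx]

lemma single_mem_mIdx (i : Fin d) {k m : ℕ} (hk : k ≤ m) : Pi.single i k ∈ mIdx d m := by
  simp only [mIdx, Finset.mem_filter, Fintype.mem_piFinset, Finset.mem_range]
  refine ⟨fun j => ?_, by simpa using hk⟩
  rcases eq_or_ne j i with rfl | hj <;> simp [*]

lemma eq_zero_or_eq_single_of_even {β : Fin d → ℕ} (hβ : β ∈ mIdx d 2)
    (hev : ∀ k, Even (β k)) : β = 0 ∨ ∃ i, β = Pi.single i 2 := by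
  have hdeg : ∑ j, β j ≤ 2 := (Finset.mem_filter.1 hβ).2
  by_cases h0 : β = 0
  · exact Or.inl h0
  obtain ⟨i, hi⟩ := Function.ne_iff.1 h0
  refine Or.inr ⟨i, funext fun j => ?_⟩
  have hβi : β i = 2 := by
    obtain ⟨r, hr⟩ := hev i
    have := (Finset.single_le_sum (fun _ _ => Nat.zero_le _) (Finset.mem_univ i)).trans hdeg
    simp only [Pi.zero_apply] at hi
    omega
  rcases eq_or_ne j i with rfl | hj
  · simp [hβi]
  · have := Finset.sum_le_sum_of_subset (f := β) (Finset.subset_univ {i, j})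
    rw [Finset.sum_pair hj.symm] at this
    simp only [Pi.single_apply, hj, if_false]
    omega

lemma sum_mIdx_two_of_odd {M : Type*} [AddCommMonoid M] (g : (Fin d → ℕ) → M)
    (hg : ∀ β ∈ mIdx d 2, ∀ k, Odd (β k) → g β = 0) :
    ∑ β ∈ mIdx d 2, g β = g 0 + ∑ i, g (Pi.single i 2) := by
  have hinj : Function.Injective fun i : Fin d => (Pi.single i 2 : Fin d → ℕ) := fun i j h => by
    by_contra hij
    simpa [Pi.single_apply, hij] using congrFun h i
  have hzero : (0 : Fin d → ℕ) ∉ Finset.univ.image fun i => Pi.single i 2 := by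
    simp
  rw [← Finset.sum_subset (s₁ := insert 0 (Finset.univ.image fun i => Pi.single i 2)),
    Finset.sum_insert hzero, Finset.sum_image fun i _ j _ h => hinj h]
  · intro β hβ
    rcases Finset.mem_insert.1 hβ with rfl | hβ
    · exact zero_mem_mIdx 2
    · obtain ⟨i, -, rfl⟩ := Finset.mem_image.1 hβ
      exact single_mem_mIdx i le_rfl
  · intro β hβ hβS
    by_cases hev : ∀ k, Even (β k)
    · rcases eq_zero_or_eq_single_of_even hβ hev with rfl | ⟨i, rfl⟩ <;> simp at hβS
    · obtain ⟨k, hk⟩ := not_forall.1 hev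
      exact hg β hβ k (Nat.not_even_iff_odd.1 hk)

end MultiIndex

section Derivatives

variable {d : ℕ}

lemma pdMulti_zero (u : (Fin d → ℝ) → ℂ) : pdMulti 0 u = u := by
  simp [pdMulti]

lemma pdMulti_single (i : Fin d) (k : ℕ) (u : (Fin d → ℝ) → ℂ) :
    pdMulti (Pi.single i k) u = (pd i)^[k] u := by
  suffices ∀ L : List (Fin d), L.Nodup →
      L.foldr (fun j v => (pd j)^[(Pi.single i k : Fin d → ℕ) j] v) u
        = if i ∈ L then (pd i)^[k] u else u by
    simpa [pdMulti] using this _ (List.nodup_finRange d)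
  intro L hL
  induction L with
  | nil => simp
  | cons j L ih =>
    obtain ⟨hjL, hL⟩ := List.nodup_cons.1 hL
    rcases eq_or_ne j i with rfl | hji
    · simp [ih hL, hjL]
    · simp [ih hL, hji, hji.symm]

lemma pd_const_smul (i : Fin d) (c : ℂ) (u : (Fin d → ℝ) → ℂ) :
    pd i (c • u) = c • pd i u := by
  funext x
  simp [pd, fderiv_const_smul_field]

lemma iterate_pd_const_smul (i : Fin d) (k : ℕ) (c : ℂ) (u : (Fin d → ℝ) → ℂ) :
    (pd i)^[k] (c • u) = c • (pd i)^[k] u :=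
  (Function.Commute.iterate_left (f := pd i) (g := (c • ·)) (pd_const_smul i c) k) u

lemma pdMulti_const_smul (β : Fin d → ℕ) (c : ℂ) (u : (Fin d → ℝ) → ℂ) :
    pdMulti β (c • u) = c • pdMulti β u := by
  unfold pdMulti
  induction List.finRange d with
  | nil => rfl
  | cons j L ih => simp only [List.foldr_cons, ih, iterate_pd_const_smul]

end Derivatives

section PlaneWave

variable {d : ℕ}

def pairing (w : Fin d → ℂ) : (Fin d → ℝ) →L[ℝ] ℂ :=
  ∑ i, w i • Complex.ofRealCLM.comp (ContinuousLinearMap.proj i)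

lemma pairing_apply (w : Fin d → ℂ) (x : Fin d → ℝ) :
    pairing w x = w ⬝ᵥ (Complex.ofReal ∘ x) := by
  simp [pairing, dotProduct]

lemma pairing_single (w : Fin d → ℂ) (i : Fin d) : pairing w (Pi.single i 1) = w i := by
  simp [pairing, Pi.single_apply, apply_ite Complex.ofReal]

def planeWave (w : Fin d → ℂ) (x : Fin d → ℝ) : ℂ :=
  Complex.exp (pairing w x)

lemma planeWave_sub (w : Fin d → ℂ) (y : Fin d → ℝ) :
    (fun x => planeWave w (x - y)) = Complex.exp (-pairing w y) • planeWave w := by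
  funext x
  simp [planeWave, sub_eq_neg_add, Complex.exp_add]

lemma planeWave_mulVec (w : Fin d → ℂ) (Λ : Matrix (Fin d) (Fin d) ℝ) :
    (fun x => planeWave w (Λ *ᵥ x)) = planeWave (w ᵥ* Λ.map Complex.ofReal) := by
  funext x
  have hcast : Complex.ofReal ∘ (Λ *ᵥ x) = Λ.map Complex.ofReal *ᵥ (Complex.ofReal ∘ x) :=
    funext (RingHom.map_mulVec Complex.ofRealHom Λ x)
  simp only [planeWave, pairing_apply, hcast, dotProduct_mulVec]

lemma smoothFn_planeWave (w : Fin d → ℂ) : SmoothFn (planeWave w) :=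
  (pairing w).contDiff.cexp

lemma pd_planeWave (w : Fin d → ℂ) (i : Fin d) : pd i (planeWave w) = w i • planeWave w := by
  funext x
  have hderiv : HasFDerivAt (planeWave w) (planeWave w x • pairing w) x :=
    ((pairing w).hasFDerivAt (x := x)).cexp
  rw [pd, hderiv.fderiv]
  simp [planeWave, pairing_single, mul_comm]

lemma iterate_pd_planeWave (w : Fin d → ℂ) (i : Fin d) (k : ℕ) :
    (pd i)^[k] (planeWave w) = w i ^ k • planeWave w := by
  induction k with
  | zero => simp
  | succ k ih =>
    rw [Function.iterate_succ_apply', ih, pd_const_smul, pd_planeWave, smul_smul, pow_succ]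

lemma pdMulti_planeWave (β : Fin d → ℕ) (w : Fin d → ℂ) :
    pdMulti β (planeWave w) = (∏ i, w i ^ β i) • planeWave w := by
  rw [pdMulti, Fin.prod_univ_def]
  induction List.finRange d with
  | nil => simp
  | cons j L ih =>
    rw [List.foldr_cons, ih, iterate_pd_const_smul, iterate_pd_planeWave, smul_smul,
      List.map_cons, List.prod_cons, mul_comm]

end PlaneWave

lemma eq_of_forall_sum_mul_prod_pow_eq {R σ : Type*} [CommRing R] [IsDomain R] [Infinite R]
    [Fintype σ] (S : Finset (σ → ℕ)) (c c' : (σ → ℕ) → R)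
    (h : ∀ w : σ → R, ∑ β ∈ S, c β * ∏ i, w i ^ β i = ∑ β ∈ S, c' β * ∏ i, w i ^ β i) :
    ∀ β ∈ S, c β = c' β := by
  classical
  let poly (c : (σ → ℕ) → R) : MvPolynomial σ R :=
    ∑ β ∈ S, MvPolynomial.monomial (Finsupp.equivFunOnFinite.symm β) (c β)
  have heval : ∀ c w, MvPolynomial.eval w (poly c) = ∑ β ∈ S, c β * ∏ i, w i ^ β i := by
    intro c w
    simp [poly, MvPolynomial.eval_monomial, Finsupp.prod_fintype]
  have hcoeff : ∀ c, ∀ β ∈ S, (poly c).coeff (Finsupp.equivFunOnFinite.symm β) = c β := by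
    intro c β hβ
    simp [poly, MvPolynomial.coeff_sum, MvPolynomial.coeff_monomial, hβ]
  have hpoly : poly c = poly c' := MvPolynomial.funext fun w => by rw [heval, heval, h]
  intro β hβ
  rw [← hcoeff c β hβ, ← hcoeff c' β hβ, hpoly]

section Symbol

variable {d : ℕ}

def symbol (m : ℕ) (A : (Fin d → ℕ) → ℂ) (w : Fin d → ℂ) : ℂ :=
  ∑ β ∈ mIdx d m, A β * ∏ i, w i ^ β i

lemma opApply_const_smul_planeWave (m : ℕ) (a : (Fin d → ℕ) → (Fin d → ℝ) → ℂ) (c : ℂ)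
    (w : Fin d → ℂ) (x : Fin d → ℝ) :
    opApply m a (c • planeWave w) x = symbol m (fun β => a β x) w * c * planeWave w x := by
  simp only [opApply, symbol, pdMulti_const_smul, pdMulti_planeWave, Finset.sum_mul,
    Pi.smul_apply, smul_eq_mul]
  exact Finset.sum_congr rfl fun β _ => by ring

lemma opApply_planeWave (m : ℕ) (a : (Fin d → ℕ) → (Fin d → ℝ) → ℂ) (w : Fin d → ℂ)
    (x : Fin d → ℝ) :
    opApply m a (planeWave w) x = symbol m (fun β => a β x) w * planeWave w x := by
  simpa using opApply_const_smul_planeWave m a 1 w x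

lemma eq_of_symbol_eq {m : ℕ} {A A' : (Fin d → ℕ) → ℂ} (h : ∀ w, symbol m A w = symbol m A' w) :
    ∀ β ∈ mIdx d m, A β = A' β :=
  eq_of_forall_sum_mul_prod_pow_eq _ A A' h

lemma symbol_two_of_odd {A : (Fin d → ℕ) → ℂ} (hodd : ∀ β ∈ mIdx d 2, ∀ k, Odd (β k) → A β = 0)
    (w : Fin d → ℂ) : symbol 2 A w = A 0 + ∑ i, A (Pi.single i 2) * w i ^ 2 := by
  rw [symbol, sum_mIdx_two_of_odd _ fun β hβ k hk => by rw [hodd β hβ k hk, zero_mul]]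
  congr 1
  · simp
  · refine Finset.sum_congr rfl fun i _ => ?_
    rw [Finset.prod_eq_single i (fun j _ hj => by simp [hj]) (by simp)]
    simp

def LorentzInvSymbol {n : ℕ} (m : ℕ) (A : (Fin (n + 1) → ℕ) → ℂ) : Prop :=
  ∀ Λ, IsLorentz Λ → ∀ w, symbol m A (w ᵥ* Λ.map Complex.ofReal) = symbol m A w

end Symbol

section Invariance

variable {n m : ℕ} {a : (Fin (n + 1) → ℕ) → (Fin (n + 1) → ℝ) → ℂ}

lemma coeff_eq_of_transInv (hT : TransInv m a) :
    ∀ β ∈ mIdx (n + 1) m, ∀ x, a β x = a β 0 := by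
  intro β hβ x
  refine eq_of_symbol_eq (A := fun β => a β x) (A' := fun β => a β 0) (fun w => ?_) β hβ
  have h := hT (-x) (planeWave w) (smoothFn_planeWave w) 0
  rw [planeWave_sub, opApply_planeWave, opApply_const_smul_planeWave] at h
  simpa [planeWave] using h

lemma lorentzInvSymbol_of_lorentzInv (hL : LorentzInv m a) :
    LorentzInvSymbol m (fun β => a β 0) := by
  intro Λ hΛ w
  have h := hL Λ hΛ (planeWave w) (smoothFn_planeWave w) 0
  rw [planeWave_mulVec, opApply_planeWave, opApply_planeWave, mulVec_zero] at h
  simpa [planeWave] using h.symm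

end Invariance

section Lorentz

variable {n : ℕ}

lemma isLorentz_diagonal (s : Fin (n + 1) → ℝ) (hs : ∀ i, s i * s i = 1) :
    IsLorentz (diagonal s) := by
  rw [IsLorentz, minkMatrix, diagonal_transpose, diagonal_mul_diagonal, diagonal_mul_diagonal]
  congr 1
  funext i
  linear_combination (if i = 0 then (1 : ℝ) else -1) * hs i

def boost (k : Fin (n + 1)) : Matrix (Fin (n + 1)) (Fin (n + 1)) ℝ :=
  Matrix.of fun i j => if i = j then (if i = 0 ∨ i = k then 5 / 4 else 1)
    else if (i = 0 ∧ j = k) ∨ (i = k ∧ j = 0) then 3 / 4 else 0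

lemma isLorentz_boost {k : Fin (n + 1)} (hk : k ≠ 0) : IsLorentz (boost k) := by
  ext i j
  simp only [mul_apply, minkMatrix, diagonal, transpose_apply, of_apply, boost, mul_ite, ite_mul,
    mul_zero, zero_mul, Finset.sum_ite_eq', Finset.mem_univ, if_true]
  by_cases hj : j = 0 ∨ j = k
  · rw [Fintype.sum_eq_add 0 k hk.symm fun x hx => by
      rcases hj with rfl | rfl <;> simp [hx.1, hx.2]]
    have hi : i = 0 ∨ i = k ∨ (i ≠ 0 ∧ 0 ≠ i ∧ i ≠ k ∧ k ≠ i) := by tauto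
    rcases hj with rfl | rfl <;> rcases hi with rfl | rfl | hi <;> simp [*, hk.symm] <;> norm_num
  · rw [not_or] at hj
    rw [Fintype.sum_eq_single j fun x hx => by simp [hx, hj.1, hj.2]]
    rcases eq_or_ne i j with rfl | hij <;> simp [*, Ne.symm]

variable {m : ℕ} {A : (Fin (n + 1) → ℕ) → ℂ}

lemma coeff_eq_zero_of_odd (hA : LorentzInvSymbol m A) {β : Fin (n + 1) → ℕ}
    (hβ : β ∈ mIdx (n + 1) m) {k : Fin (n + 1)} (hk : Odd (β k)) : A β = 0 := by
  let s : Fin (n + 1) → ℝ := fun i => if i = k then -1 else 1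
  have hflip : ∀ w, symbol m A (w ᵥ* (diagonal s).map Complex.ofReal)
      = symbol m (fun β => A β * (-1) ^ β k) w := by
    intro w
    rw [diagonal_map (f := Complex.ofReal) Complex.ofReal_zero, symbol, symbol]
    refine Finset.sum_congr rfl fun β _ => ?_
    have hsign : ∏ i, (s i : ℂ) ^ β i = (-1) ^ β k := by
      simp [s, apply_ite Complex.ofReal, ite_pow, Finset.prod_ite_eq']
    simp only [vecMul_diagonal, mul_pow, Finset.prod_mul_distrib, hsign]
    ring
  have hs : ∀ i, s i * s i = 1 := fun i => by by_cases i = k <;> simp [s, *]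
  have h := eq_of_symbol_eq (A := fun β => A β * (-1) ^ β k) (A' := A)
    (fun w => by rw [← hflip, hA _ (isLorentz_diagonal s hs)]) β hβ
  rw [hk.neg_one_pow] at h
  linear_combination -h / 2

lemma coeff_single_two_eq_neg (hA : LorentzInvSymbol 2 A)
    (hodd : ∀ β ∈ mIdx (n + 1) 2, ∀ k, Odd (β k) → A β = 0) {k : Fin (n + 1)} (hk : k ≠ 0) :
    A (Pi.single k 2) = -A (Pi.single 0 2) := by
  have h := hA (boost k) (isLorentz_boost hk) (Pi.single 0 1)
  rw [single_vecMul, symbol_two_of_odd hodd, symbol_two_of_odd hodd] at h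
  rw [Fintype.sum_eq_add 0 k hk.symm fun x hx => by simp [boost, hx.1, hx.2, Ne.symm hx.1]] at h
  rw [Fintype.sum_eq_single 0 fun x hx => by simp [hx]] at h
  simp [boost, hk, hk.symm] at h
  linear_combination (16 / 9 : ℂ) * h

end Lorentz

section SecondOrder

variable {n : ℕ} {A : (Fin (n + 1) → ℕ) → ℂ}

lemma coeff_single_zero_two_ne_zero (hodd : ∀ β ∈ mIdx (n + 1) 2, ∀ k, Odd (β k) → A β = 0)
    (hspace : ∀ k ≠ 0, A (Pi.single k 2) = -A (Pi.single 0 2))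
    (htop : ∃ β ∈ mIdx (n + 1) 2, ∑ i, β i = 2 ∧ A β ≠ 0) : A (Pi.single 0 2) ≠ 0 := by
  obtain ⟨β, hβ, hdeg, hAβ⟩ := htop
  have hev : ∀ k, Even (β k) := fun k => Nat.not_odd_iff_even.1 fun hk => hAβ (hodd β hβ k hk)
  rcases eq_zero_or_eq_single_of_even hβ hev with rfl | ⟨i, rfl⟩
  · simp at hdeg
  · rcases eq_or_ne i 0 with rfl | hi
    · exact hAβ
    · rwa [hspace i hi, neg_ne_zero] at hAβ

lemma opApply_two_eq_dAlem {a : (Fin (n + 1) → ℕ) → (Fin (n + 1) → ℝ) → ℂ} {x : Fin (n + 1) → ℝ}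
    (hcoeff : ∀ β ∈ mIdx (n + 1) 2, a β x = A β)
    (hodd : ∀ β ∈ mIdx (n + 1) 2, ∀ k, Odd (β k) → A β = 0)
    (hspace : ∀ k ≠ 0, A (Pi.single k 2) = -A (Pi.single 0 2)) (u : (Fin (n + 1) → ℝ) → ℂ) :
    opApply 2 a u x = A (Pi.single 0 2) * dAlem u x + A 0 * u x := by
  rw [opApply, Finset.sum_congr rfl fun β hβ => by rw [hcoeff β hβ],
    sum_mIdx_two_of_odd _ fun β hβ k hk => by rw [hodd β hβ k hk, zero_mul], Fin.sum_univ_succ]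
  simp only [pdMulti_zero, pdMulti_single, Function.iterate_succ_apply',
    Function.iterate_zero_apply, hspace _ (Fin.succ_ne_zero _), neg_mul, Finset.sum_neg_distrib,
    ← Finset.mul_sum, dAlem]
  ring

end SecondOrder

theorem second_order_poincare_invariant_general (n : ℕ)
    (a : (Fin (n + 1) → ℕ) → (Fin (n + 1) → ℝ) → ℂ)
    (htop : ∃ β ∈ mIdx (n + 1) 2, (∑ i, β i) = 2 ∧ ∃ x, a β x ≠ 0)
    (hT : TransInv 2 a) (hL : LorentzInv 2 a) :
    ∃ α c : ℂ, α ≠ 0 ∧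
      ∀ u : (Fin (n + 1) → ℝ) → ℂ, SmoothFn u → ∀ x,
        opApply 2 a u x = α * dAlem u x + c * u x := by
  set A : (Fin (n + 1) → ℕ) → ℂ := fun β => a β 0
  have hconst := coeff_eq_of_transInv hT
  have hinv : LorentzInvSymbol 2 A := lorentzInvSymbol_of_lorentzInv hL
  have hodd : ∀ β ∈ mIdx (n + 1) 2, ∀ k, Odd (β k) → A β = 0 :=
    fun β hβ k hk => coeff_eq_zero_of_odd hinv hβ hk
  have hspace : ∀ k ≠ 0, A (Pi.single k 2) = -A (Pi.single 0 2) :=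
    fun k hk => coeff_single_two_eq_neg hinv hodd hk
  have htop' : ∃ β ∈ mIdx (n + 1) 2, ∑ i, β i = 2 ∧ A β ≠ 0 := by
    obtain ⟨β, hβ, hdeg, x, hx⟩ := htop
    exact ⟨β, hβ, hdeg, by rwa [hconst β hβ x] at hx⟩
  exact ⟨A (Pi.single 0 2), A 0, coeff_single_zero_two_ne_zero hodd hspace htop',
    fun u _ x => opApply_two_eq_dAlem (fun β hβ => hconst β hβ x) hodd hspace u⟩

/-- Corollary 1: Any Poincaré invariant linear partial differential
operator of the second order on space-time `ℝ × ℝⁿ` is of the form `L = α □ + β` with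
`α ≠ 0`. -/
theorem second_order_poincare_invariant (n : ℕ)
    (a : (Fin (n + 1) → ℕ) → (Fin (n + 1) → ℝ) → ℂ)
    (hcont : ∀ β ∈ mIdx (n + 1) 2, Continuous (a β))
    (htop : ∃ β ∈ mIdx (n + 1) 2, (∑ i, β i) = 2 ∧ ∃ x, a β x ≠ 0)
    (hT : TransInv 2 a) (hL : LorentzInv 2 a) :
    ∃ α c : ℂ, α ≠ 0 ∧
      ∀ u : (Fin (n + 1) → ℝ) → ℂ, SmoothFn u → ∀ x,
        opApply 2 a u x = α * dAlem u x + c * u x :=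
  second_order_poincare_invariant_general n a htop hT hL
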